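/- For φ(x) = e^{-|x|} and any v ∈ H¹(ℝ), one has (1/2)(φ ∗ (φ' v))(x) + (1/2)(φ' ∗ (φ v))(x) = −φ(x) ∫₀ˣ v(y) dy for all x ∈ ℝ. -/

import Mathlib

open Real MeasureTheory intervalIntegral

noncomputable def peakon : ℝ → ℝ := fun x => Real.exp (-|x|)

noncomputable def peakon' : ℝ → ℝ := fun x => -(Real.sign x) * Real.exp (-|x|)

/-!
The two integrands add up to `-(sign y + sign (x - y)) e^{-(|y| + |x - y|)} v y`. Off the null set
`{0, x}`, this vanishes when `y` and `x - y` have opposite signs, and when they have the same sign,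
i.e. `y` lies strictly between `0` and `x`, it equals `-2 sign x e^{-|x|} v y`. Integrating over
`Ι 0 x` gives `-2 e^{-|x|} ∫₀ˣ v`. Both integrands are dominated by `e^{-|y|} |v y|`, which is
integrable by Cauchy–Schwarz since `e^{-|·|} ∈ L²`.
-/

open Set Interval

lemma Real.measurable_sign : Measurable Real.sign :=
  Measurable.ite measurableSet_Iio measurable_const
    (Measurable.ite measurableSet_Ioi measurable_const measurable_const)

lemma Real.abs_sign_le_one (r : ℝ) : |Real.sign r| ≤ 1 := by
  rcases Real.sign_apply_eq r with h | h | h <;> simp [h]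

lemma integrable_exp_neg_mul_abs {b : ℝ} (hb : 0 < b) :
    Integrable fun x : ℝ => exp (-b * |x|) := by
  have hIoi : IntegrableOn (fun x : ℝ => exp (-b * |x|)) (Ioi 0) :=
    (exp_neg_integrableOn_Ioi 0 hb).congr_fun
      (fun x hx => by rw [abs_of_pos (mem_Ioi.mp hx)]) measurableSet_Ioi
  have hIio : IntegrableOn (fun x : ℝ => exp (-b * |x|)) (Iio 0) := by
    have := IntegrableOn.comp_neg_Iio (c := (0 : ℝ)) (μ := volume) (by rwa [neg_zero])
    simpa only [abs_neg] using this
  rw [← integrableOn_univ, ← Iio_union_Ici, integrableOn_union]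
  exact ⟨hIio, Iff.mpr integrableOn_Ici_iff_integrableOn_Ioi hIoi⟩

lemma continuous_peakon : Continuous peakon := by
  unfold peakon; fun_prop

lemma measurable_peakon' : Measurable peakon' :=
  (Real.measurable_sign.neg.mul continuous_peakon.measurable :)

lemma abs_peakon_le_one (x : ℝ) : |peakon x| ≤ 1 := by
  rw [peakon, abs_of_pos (exp_pos _), exp_le_one_iff, neg_nonpos]
  exact abs_nonneg x

lemma abs_peakon'_le_one (x : ℝ) : |peakon' x| ≤ 1 := by
  rw [peakon', abs_mul, abs_neg, ← one_mul 1]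
  exact mul_le_mul (Real.abs_sign_le_one x) (abs_peakon_le_one x) (abs_nonneg _) zero_le_one

lemma memLp_two_peakon : MemLp peakon 2 := by
  refine (memLp_two_iff_integrable_sq continuous_peakon.aestronglyMeasurable).mpr ?_
  refine (integrable_exp_neg_mul_abs two_pos).congr (ae_of_all _ fun x => ?_)
  simp only [peakon, sq, ← exp_add]
  ring_nf

lemma MeasureTheory.MemLp.integrable_peakon_mul {v : ℝ → ℝ} (hv : MemLp v 2) :
    Integrable fun y => peakon y * v y :=
  memLp_two_peakon.integrable_mul hv

lemma Real.sign_add_sign_of_mul_neg {a b : ℝ} (h : a * b < 0) :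
    Real.sign a + Real.sign b = 0 := by
  rcases mul_neg_iff.mp h with ⟨ha, hb⟩ | ⟨ha, hb⟩
  · rw [Real.sign_of_pos ha, Real.sign_of_neg hb]; ring
  · rw [Real.sign_of_neg ha, Real.sign_of_pos hb]; ring

lemma Real.sign_add_sign_of_mul_pos {a b : ℝ} (h : 0 < a * b) :
    Real.sign a + Real.sign b = 2 * Real.sign (a + b) := by
  rcases mul_pos_iff.mp h with ⟨ha, hb⟩ | ⟨ha, hb⟩
  · rw [Real.sign_of_pos ha, Real.sign_of_pos hb, Real.sign_of_pos (add_pos ha hb)]; ring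
  · rw [Real.sign_of_neg ha, Real.sign_of_neg hb, Real.sign_of_neg (add_neg ha hb)]; ring

lemma abs_add_of_mul_pos {a b : ℝ} (h : 0 < a * b) : |a + b| = |a| + |b| :=
  (abs_add_eq_add_abs_iff a b).mpr <| by
    rcases mul_pos_iff.mp h with ⟨ha, hb⟩ | ⟨ha, hb⟩
    · exact .inl ⟨ha.le, hb.le⟩
    · exact .inr ⟨ha.le, hb.le⟩

lemma peakon_sub_mul_peakon'_add (x y : ℝ) :
    peakon (x - y) * peakon' y + peakon' (x - y) * peakon y
      = -(Real.sign y + Real.sign (x - y)) * exp (-(|y| + |x - y|)) := by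
  simp only [peakon, peakon', neg_add, exp_add]
  ring

lemma mem_uIoc_zero_of_mul_sub_pos {x y : ℝ} (h : 0 < y * (x - y)) : y ∈ Ι 0 x := by
  rw [mem_uIoc]
  rcases mul_pos_iff.mp h with ⟨hy, hxy⟩ | ⟨hy, hxy⟩
  · exact .inl ⟨hy, by linarith⟩
  · exact .inr ⟨by linarith, hy.le⟩

lemma notMem_uIoc_zero_of_mul_sub_neg {x y : ℝ} (h : y * (x - y) < 0) : y ∉ Ι 0 x := by
  rw [mem_uIoc]
  rcases mul_neg_iff.mp h with ⟨hy, hxy⟩ | ⟨hy, hxy⟩ <;>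
    rintro (⟨h₁, h₂⟩ | ⟨h₁, h₂⟩) <;> linarith

lemma peakon_sub_mul_peakon'_add_ae_eq (x : ℝ) :
    (fun y => peakon (x - y) * peakon' y + peakon' (x - y) * peakon y)
      =ᵐ[volume] (Ι 0 x).indicator fun _ => -2 * Real.sign x * peakon x := by
  filter_upwards [Measure.ae_ne volume 0, Measure.ae_ne volume x] with y hy0 hyx
  rw [peakon_sub_mul_peakon'_add]
  rcases (mul_ne_zero hy0 (sub_ne_zero.mpr hyx.symm)).lt_or_gt with h | h
  · rw [indicator_of_notMem (notMem_uIoc_zero_of_mul_sub_neg h),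
      Real.sign_add_sign_of_mul_neg h, neg_zero, zero_mul]
  · rw [indicator_of_mem (mem_uIoc_zero_of_mul_sub_pos h), Real.sign_add_sign_of_mul_pos h,
      ← abs_add_of_mul_pos h, add_sub_cancel, peakon]
    ring

lemma intervalIntegral_eq_sign_sub_smul_integral_uIoc {E : Type*} [NormedAddCommGroup E]
    [NormedSpace ℝ E] (f : ℝ → E) (a b : ℝ) (μ : Measure ℝ) :
    ∫ x in a..b, f x ∂μ = Real.sign (b - a) • ∫ x in Ι a b, f x ∂μ := by
  rw [intervalIntegral_eq_integral_uIoc]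
  rcases lt_trichotomy a b with h | rfl | h
  · rw [if_pos h.le, Real.sign_of_pos (sub_pos.mpr h)]
  · simp
  · rw [if_neg h.not_ge, Real.sign_of_neg (sub_neg.mpr h)]

theorem integral_peakon_conv_add_integral_peakon'_conv {v : ℝ → ℝ}
    (hv : Integrable fun y => peakon y * v y) (x : ℝ) :
    (∫ y, peakon (x - y) * (peakon' y * v y)) + ∫ y, peakon' (x - y) * (peakon y * v y)
      = -2 * peakon x * ∫ y in (0 : ℝ)..x, v y := by
  have h₁ : Integrable fun y => peakon (x - y) * (peakon' y * v y) := by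
    refine (hv.bdd_mul (c := 1) (f := fun y => peakon (x - y) * -Real.sign y) ?_ ?_).congr
      (ae_of_all _ fun y => by simp only [peakon, peakon']; ring)
    · exact ((continuous_peakon.comp (continuous_sub_left x)).measurable.mul
        Real.measurable_sign.neg).aestronglyMeasurable
    · refine ae_of_all _ fun y => ?_
      rw [norm_mul, norm_neg, ← one_mul 1]
      exact mul_le_mul (abs_peakon_le_one _) (Real.abs_sign_le_one y) (norm_nonneg _) zero_le_one
  have h₂ : Integrable fun y => peakon' (x - y) * (peakon y * v y) :=
    hv.bdd_mul (measurable_peakon'.comp (measurable_const.sub measurable_id)).aestronglyMeasurable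
      (ae_of_all _ fun y => abs_peakon'_le_one (x - y))
  have hsum : (fun y => peakon (x - y) * (peakon' y * v y) + peakon' (x - y) * (peakon y * v y))
      =ᵐ[volume] (Ι 0 x).indicator fun y => -2 * Real.sign x * peakon x * v y := by
    filter_upwards [peakon_sub_mul_peakon'_add_ae_eq x] with y hy
    rw [indicator_mul_left (f := fun _ => -2 * Real.sign x * peakon x), ← hy]
    ring
  rw [← integral_add h₁ h₂, integral_congr_ae hsum,
    MeasureTheory.integral_indicator measurableSet_uIoc,
    MeasureTheory.integral_const_mul, intervalIntegral_eq_sign_sub_smul_integral_uIoc, sub_zero,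
    smul_eq_mul]
  ring

theorem convolution_identity_half_general (v : ℝ → ℝ)
    (hv_L2 : MemLp v 2 (volume : Measure ℝ)) (x : ℝ) :
    (1/2) * (∫ y : ℝ, peakon (x - y) * (peakon' y * v y))
      + (1/2) * (∫ y : ℝ, peakon' (x - y) * (peakon y * v y))
      = -peakon x * ∫ y in (0:ℝ)..x, v y := by
  rw [← mul_add, integral_peakon_conv_add_integral_peakon'_conv hv_L2.integrable_peakon_mul]
  ring

theorem convolution_identity_half (v : ℝ → ℝ)
    (hv_cont : Continuous v)
    (hv_L2 : MemLp v 2 (volume : Measure ℝ))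
    (hv'_L2 : MemLp (deriv v) 2 (volume : Measure ℝ))
    (hv_diff : ∀ᵐ x : ℝ, DifferentiableAt ℝ v x) (x : ℝ) :
    (1/2) * (∫ y : ℝ, peakon (x - y) * (peakon' y * v y))
      + (1/2) * (∫ y : ℝ, peakon' (x - y) * (peakon y * v y))
      = -peakon x * ∫ y in (0:ℝ)..x, v y :=
  convolution_identity_half_general v hv_L2 x
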